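/- arXiv:0907.5210 — 4 statements merged into one kernel-verified Lean document; each statement's English description precedes it below -/
import Mathlib

section
/- If B is a Young function and 0 < γ < 1, then ψ(t) = B(t^γ)^{1/γ} is also a Young function. -/
open MeasureTheory ENNReal Set
open scoped BigOperators NNReal

noncomputable section
namespace Frac

abbrev Rn (n : ℕ) := Fin n → ℝ

/-- A cube in ℝⁿ: closed ball of radius `r` (half side length) around `c` in the sup metric. -/
def cube {n : ℕ} (c : Rn n) (r : ℝ) : Set (Rn n) := Metric.closedBall c r

def vol {n : ℕ} (c : Rn n) (r : ℝ) : ℝ≥0∞ := volume (cube c r)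

/-- Average of an `ℝ≥0∞`-valued function over a cube. -/
def avg {n : ℕ} (c : Rn n) (r : ℝ) (h : Rn n → ℝ≥0∞) : ℝ≥0∞ :=
  (vol c r)⁻¹ * ∫⁻ y in cube c r, h y

/-- Multilinear fractional maximal operator `𝓜_α`. -/
def mfm {n m : ℕ} (α : ℝ) (f : Fin m → Rn n → ℝ≥0∞) (x : Rn n) : ℝ≥0∞ :=
  ⨆ (c : Rn n) (r : ℝ) (_ : 0 < r) (_ : x ∈ cube c r),
    (vol c r) ^ (α / (n : ℝ)) * ∏ i, avg c r (f i)

/-- Linear fractional maximal operator `M_β`. -/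
def lfm {n : ℕ} (β : ℝ) (h : Rn n → ℝ≥0∞) (x : Rn n) : ℝ≥0∞ :=
  ⨆ (c : Rn n) (r : ℝ) (_ : 0 < r) (_ : x ∈ cube c r),
    (vol c r) ^ (β / (n : ℝ)) * avg c r h

/-- Hardy–Littlewood maximal operator. -/
def HL {n : ℕ} (h : Rn n → ℝ≥0∞) : Rn n → ℝ≥0∞ := lfm 0 h

/-- Luxemburg `B`-average of `f` over a cube. -/
def luxAvg {n : ℕ} (B : ℝ → ℝ) (c : Rn n) (r : ℝ) (f : Rn n → ℝ) : ℝ :=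
  sInf {lam : ℝ | 0 < lam ∧ avg c r (fun y => ENNReal.ofReal (B (|f y| / lam))) ≤ 1}

/-- Orlicz maximal operator `M_B`. -/
def mOrlicz {n : ℕ} (B : ℝ → ℝ) (f : Rn n → ℝ) (x : Rn n) : ℝ≥0∞ :=
  ⨆ (c : Rn n) (r : ℝ) (_ : 0 < r) (_ : x ∈ cube c r), ENNReal.ofReal (luxAvg B c r f)

/-- Multilinear fractional Orlicz maximal operator `𝓜_{α,B}`. -/
def mfmOrlicz {n m : ℕ} (α : ℝ) (B : ℝ → ℝ) (f : Fin m → Rn n → ℝ) (x : Rn n) : ℝ≥0∞ :=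
  ⨆ (c : Rn n) (r : ℝ) (_ : 0 < r) (_ : x ∈ cube c r),
    (vol c r) ^ (α / (n : ℝ)) * ∏ i, ENNReal.ofReal (luxAvg B c r (f i))

/-- `L^p` norm of an `ℝ≥0∞`-valued function. -/
def lpN {n : ℕ} (p : ℝ) (h : Rn n → ℝ≥0∞) : ℝ≥0∞ := (∫⁻ y, h y ^ p) ^ (1 / p)

/-- Weak `L^q(u)` quasi-norm. -/
def wkN {n : ℕ} (q : ℝ) (h : Rn n → ℝ≥0∞) (u : Rn n → ℝ≥0∞) : ℝ≥0∞ :=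
  ⨆ (lam : ℝ≥0) (_ : 0 < lam),
    (lam : ℝ≥0∞) * (∫⁻ x in {x | (lam : ℝ≥0∞) < h x}, u x) ^ (1 / q)

/-- Young function: `B t = ∫₀ᵗ b`, `b` nontrivial nonnegative increasing. -/
def IsYoung (B : ℝ → ℝ) : Prop :=
  ∃ b : ℝ → ℝ, (∀ s, 0 ≤ b s) ∧ MonotoneOn b (Ici 0) ∧ (∃ s, 0 ≤ s ∧ b s ≠ 0) ∧
    ∀ t, 0 ≤ t → B t = ∫ s in (0:ℝ)..t, b s

/-- `Binv` is the inverse of `B` on `[0,∞)`. -/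
def IsYoungInv (B Binv : ℝ → ℝ) : Prop :=
  (∀ t, 0 ≤ t → B (Binv t) = t) ∧ (∀ t, 0 ≤ t → Binv (B t) = t)

/-- Multilinear fractional integral `𝓘_α`. -/
def Ia {n m : ℕ} (α : ℝ) (f : Fin m → Rn n → ℝ≥0∞) (x : Rn n) : ℝ≥0∞ :=
  ∫⁻ y : Fin m → Rn n, (∏ i, f i (y i)) *
    (ENNReal.ofReal (∑ i, dist x (y i))) ^ (α - (n : ℝ) * m)

/-- The Young function `t (1 + log⁺ t)^δ`. -/
def Bdelta (δ : ℝ) (t : ℝ) : ℝ := t * (1 + max (Real.log t) 0) ^ δ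

/-- Multilinear Muckenhoupt class `A_{P⃗}` (the `P i = 1` factor is the essential-inf one). -/
def multiA {n m : ℕ} (P : Fin m → ℝ) (v : Fin m → Rn n → ℝ) : Prop :=
  ∃ C : ℝ≥0∞, C ≠ ⊤ ∧ ∀ (c : Rn n) (r : ℝ), 0 < r →
    (avg c r (fun y => ∏ i, ENNReal.ofReal (v i y ^ ((∑ j, 1 / P j)⁻¹ / P i)))) ^ (∑ j, 1 / P j) *
    ∏ i, (if P i = 1 then
        (essInf (fun y => ENNReal.ofReal (v i y)) (volume.restrict (cube c r)))⁻¹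
      else (avg c r (fun y => ENNReal.ofReal (v i y ^ (1 - P i / (P i - 1))))) ^ ((P i - 1) / P i)) ≤ C

/-- Muckenhoupt–Wheeden `A_{p,q}` class. -/
def Apq {n : ℕ} (p q : ℝ) (w : Rn n → ℝ) : Prop :=
  ∃ C : ℝ≥0∞, C ≠ ⊤ ∧ ∀ (c : Rn n) (r : ℝ), 0 < r →
    (avg c r (fun y => ENNReal.ofReal (w y ^ q))) ^ (1/q) *
    (if p = 1 then (essInf (fun y => ENNReal.ofReal (w y)) (volume.restrict (cube c r)))⁻¹
     else (avg c r (fun y => ENNReal.ofReal (w y ^ (-(p/(p-1)))))) ^ ((p-1)/p)) ≤ C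

/-- Classical Muckenhoupt `A_s` class. -/
def Amuck {n : ℕ} (s : ℝ) (v : Rn n → ℝ) : Prop :=
  ∃ C : ℝ≥0∞, C ≠ ⊤ ∧ ∀ (c : Rn n) (r : ℝ), 0 < r →
    avg c r (fun y => ENNReal.ofReal (v y)) *
    (if s = 1 then (essInf (fun y => ENNReal.ofReal (v y)) (volume.restrict (cube c r)))⁻¹
     else (avg c r (fun y => ENNReal.ofReal (v y ^ (-(1/(s-1)))))) ^ (s-1)) ≤ C

/-- Moen's multilinear fractional class `A_{P⃗,q}`. -/
def ApqMulti {n m : ℕ} (P : Fin m → ℝ) (q : ℝ) (w : Fin m → Rn n → ℝ) : Prop :=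
  ∃ C : ℝ≥0∞, C ≠ ⊤ ∧ ∀ (c : Rn n) (r : ℝ), 0 < r →
    (avg c r (fun y => ENNReal.ofReal ((∏ i, w i y) ^ q))) ^ (1/q) *
    ∏ i, (if P i = 1 then
        (essInf (fun y => ENNReal.ofReal (w i y)) (volume.restrict (cube c r)))⁻¹
      else (avg c r (fun y => ENNReal.ofReal (w i y ^ (-(P i/(P i - 1)))))) ^ ((P i - 1)/(P i))) ≤ C

def DoublingFn (B : ℝ → ℝ) : Prop := ∃ c : ℝ, 0 < c ∧ ∀ t, 0 ≤ t → B (2*t) ≤ c * B t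

/-- The `B_r` condition: `∫_c^∞ B(t)/t^r dt/t < ∞`. -/
def BrCond (B : ℝ → ℝ) (r : ℝ) : Prop :=
  ∃ c : ℝ, 0 < c ∧ IntegrableOn (fun t => B t / t ^ (r+1)) (Ici c)

/-- A (minimal axiomatization of a) Banach function space norm over ℝⁿ. -/
structure BFS (n : ℕ) where
  N : (Rn n → ℝ) → ℝ≥0∞
  norm_zero : N 0 = 0
  mono : ∀ f g : Rn n → ℝ, (∀ x, |f x| ≤ |g x|) → N f ≤ N g

/-- Associate space norm of a BFS. -/
def BFS.assocN {n : ℕ} (Y : BFS n) (g : Rn n → ℝ) : ℝ≥0∞ :=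
  ⨆ (f : Rn n → ℝ) (_ : Y.N f ≤ 1), ∫⁻ x, ENNReal.ofReal |f x * g x|

/-- The `Y`-average over a cube: `‖δ_{l(Q)} (f χ_Q)‖_Y`, with `l(Q) = 2r`. -/
def BFS.locAvg {n : ℕ} (Y : BFS n) (c : Rn n) (r : ℝ) (f : Rn n → ℝ) : ℝ≥0∞ :=
  Y.N (fun x => Set.indicator (cube c r) f ((2*r) • x))

/-- Maximal operator associated to the associate space `Y'`. -/
def assocMax {n : ℕ} (Y : BFS n) (f : Rn n → ℝ) (x : Rn n) : ℝ≥0∞ :=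
  ⨆ (c : Rn n) (r : ℝ) (_ : 0 < r) (_ : x ∈ cube c r),
    Y.assocN (fun y => Set.indicator (cube c r) f ((2*r) • y))

/-- Essentially nondecreasing positive function with `φ(t)/t → 0`. -/
def EssND (φ : ℝ → ℝ) : Prop :=
  (∀ t, 0 < t → 0 < φ t) ∧ (∃ ρ : ℝ, 0 < ρ ∧ ∀ t s, 0 < t → t ≤ s → φ t ≤ ρ * φ s) ∧
    Filter.Tendsto (fun t => φ t / t) Filter.atTop (nhds 0)

/-- Generalized multilinear maximal operator `𝓜_φ`. -/
def mphi {n m : ℕ} (φ : ℝ → ℝ) (f : Fin m → Rn n → ℝ≥0∞) (x : Rn n) : ℝ≥0∞ :=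
  ⨆ (c : Rn n) (r : ℝ) (_ : 0 < r) (_ : x ∈ cube c r),
    ENNReal.ofReal (φ ((vol c r).toReal)) * ∏ i, avg c r (f i)

/-! Extend the density `b` of `B` increasingly to all of `ℝ`. Off a countable set, the chain rule
gives `ψ'(x) = (B(u)/u)^(1/γ - 1) b(u)` with `u = x^γ`, and `ψ` is continuous, so `ψ = ∫₀ ψ'`.
This density is increasing: `b` is, and so is `B(u)/u = ∫₀¹ b(us) ds`, the mean of `b` over
`[0, u]`, while `γ ≤ 1` makes the exponent `1/γ - 1` nonnegative. -/

section YoungPower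

open intervalIntegral

lemma IsYoung.exists_monotone_density {B : ℝ → ℝ} (hB : IsYoung B) :
    ∃ b : ℝ → ℝ, Monotone b ∧ (∀ s, 0 ≤ b s) ∧ (∃ s, 0 ≤ s ∧ 0 < b s) ∧
      ∀ t, 0 ≤ t → B t = ∫ s in (0:ℝ)..t, b s := by
  obtain ⟨b, hb0, hb, ⟨s₀, hs₀, hbs₀⟩, hB⟩ := hB
  refine ⟨fun s => b (max s 0),
    fun u v huv => hb (le_max_right u 0) (le_max_right v 0) (max_le_max_right 0 huv),
    fun s => hb0 _, ⟨s₀, hs₀, by simpa [hs₀] using (hb0 s₀).lt_of_ne' hbs₀⟩, fun t ht => ?_⟩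
  rw [hB t ht]
  refine integral_congr fun s hs => ?_
  rw [uIcc_of_le ht] at hs
  simp [max_eq_left hs.1]

variable {b : ℝ → ℝ}

lemma integral_div_eq_integral_comp_mul (b : ℝ → ℝ) {u : ℝ} (hu : u ≠ 0) :
    (∫ s in (0:ℝ)..u, b s) / u = ∫ x in (0:ℝ)..1, b (u * x) := by
  rw [integral_comp_mul_left b hu, mul_zero, mul_one, smul_eq_mul, inv_mul_eq_div]

lemma integral_div_nonneg (hb0 : ∀ s, 0 ≤ b s) (u : ℝ) : 0 ≤ (∫ s in (0:ℝ)..u, b s) / u := by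
  rcases eq_or_ne u 0 with rfl | hu
  · simp
  · rw [integral_div_eq_integral_comp_mul b hu]
    exact integral_nonneg zero_le_one fun x _ => hb0 _

lemma monotoneOn_integral_div (hb : Monotone b) (hb0 : ∀ s, 0 ≤ b s) :
    MonotoneOn (fun u => (∫ s in (0:ℝ)..u, b s) / u) (Ici 0) := by
  intro u hu v hv huv
  rcases (mem_Ici.1 hu).eq_or_lt with rfl | hu
  · simpa using integral_div_nonneg hb0 v
  dsimp only
  rw [integral_div_eq_integral_comp_mul b hu.ne',
    integral_div_eq_integral_comp_mul b (hu.trans_le huv).ne']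
  exact integral_mono_on zero_le_one
    (hb.comp (monotone_mul_left_of_nonneg hu.le)).intervalIntegrable
    (hb.comp (monotone_mul_left_of_nonneg (hu.le.trans huv))).intervalIntegrable
    fun x hx => hb (mul_le_mul_of_nonneg_right huv hx.1)

/-- The derivative `(1/γ) B(u)^(1/γ - 1) b(u) γ x^(γ - 1)` of `x ↦ B(x^γ)^(1/γ)`, where `u = x^γ`,
rewritten with `x^(γ - 1) = u^(1 - 1/γ)`. -/
def powDensity (b : ℝ → ℝ) (γ x : ℝ) : ℝ :=
  ((∫ s in (0:ℝ)..x ^ γ, b s) / x ^ γ) ^ (1 / γ - 1) * b (x ^ γ)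

lemma powDensity_nonneg (hb0 : ∀ s, 0 ≤ b s) (γ x : ℝ) : 0 ≤ powDensity b γ x :=
  mul_nonneg (Real.rpow_nonneg (integral_div_nonneg hb0 _) _) (hb0 _)

lemma monotoneOn_powDensity (hb : Monotone b) (hb0 : ∀ s, 0 ≤ b s) {γ : ℝ} (hγ : 0 < γ)
    (hγ1 : γ ≤ 1) : MonotoneOn (powDensity b γ) (Ici 0) := by
  intro x hx y _ hxy
  have hu : 0 ≤ x ^ γ := Real.rpow_nonneg hx γ
  have huv : x ^ γ ≤ y ^ γ := Real.rpow_le_rpow hx hxy hγ.le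
  refine mul_le_mul (Real.rpow_le_rpow (integral_div_nonneg hb0 _)
    (monotoneOn_integral_div hb hb0 hu (hu.trans huv) huv) (sub_nonneg.2 (one_le_one_div hγ hγ1)))
    (hb huv) (hb0 _) (Real.rpow_nonneg (integral_div_nonneg hb0 _) _)

lemma hasDerivAt_integral_rpow_rpow (hb : Monotone b) (hb0 : ∀ s, 0 ≤ b s) {γ : ℝ} (hγ : 0 < γ)
    (hγ1 : γ ≤ 1) {x : ℝ} (hx : 0 < x) (hc : ContinuousAt b (x ^ γ)) :
    HasDerivAt (fun y => (∫ s in (0:ℝ)..y ^ γ, b s) ^ (1 / γ)) (powDensity b γ x) x := by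
  have hB : HasDerivAt (fun v => ∫ s in (0:ℝ)..v, b s) (b (x ^ γ)) (x ^ γ) :=
    integral_hasDerivAt_right hb.intervalIntegrable
      hb.measurable.stronglyMeasurable.stronglyMeasurableAtFilter hc
  refine ((hB.comp x (Real.hasDerivAt_rpow_const (Or.inl hx.ne'))).rpow_const
    (Or.inr (one_le_one_div hγ hγ1))).congr_deriv ?_
  have hu : 0 < x ^ γ := Real.rpow_pos_of_pos hx γ
  have hx' : x ^ (γ - 1) = (x ^ γ) ^ (-(1 / γ - 1)) := by
    rw [← Real.rpow_mul hx.le]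
    congr 1
    field_simp
    ring
  rw [powDensity, Function.comp_apply, Real.div_rpow (integral_nonneg hu.le fun s _ => hb0 s) hu.le,
    hx', Real.rpow_neg hu.le]
  field_simp

lemma exists_powDensity_ne_zero (hb : Monotone b) (hb0 : ∀ s, 0 ≤ b s) {γ : ℝ} (hγ : 0 < γ)
    (h : ∃ s, 0 ≤ s ∧ 0 < b s) : ∃ x, 0 ≤ x ∧ powDensity b γ x ≠ 0 := by
  obtain ⟨s₀, hs₀, hbs₀⟩ := h
  set u := s₀ + 1
  have hu : 0 < u := by positivity
  have hBu : 0 < ∫ s in (0:ℝ)..u, b s := by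
    rw [← integral_add_adjacent_intervals hb.intervalIntegrable hb.intervalIntegrable]
    exact add_pos_of_nonneg_of_pos (integral_nonneg hs₀ fun s _ => hb0 s)
      (intervalIntegral_pos_of_pos_on hb.intervalIntegrable
        (fun s hs => hbs₀.trans_le (hb hs.1.le)) (lt_add_one s₀))
  refine ⟨u ^ γ⁻¹, Real.rpow_nonneg hu.le _, ?_⟩
  rw [powDensity, Real.rpow_inv_rpow hu.le hγ.ne']
  exact (_root_.mul_pos (Real.rpow_pos_of_pos (div_pos hBu hu) _)
    (hbs₀.trans_le (hb (lt_add_one s₀).le))).ne'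

lemma integral_powDensity (hb : Monotone b) (hb0 : ∀ s, 0 ≤ b s) {γ : ℝ} (hγ : 0 < γ)
    (hγ1 : γ ≤ 1) {t : ℝ} (ht : 0 ≤ t) :
    ∫ x in (0:ℝ)..t, powDensity b γ x = (∫ s in (0:ℝ)..t ^ γ, b s) ^ (1 / γ) := by
  have hcont : Continuous fun y => (∫ s in (0:ℝ)..y ^ γ, b s) ^ (1 / γ) :=
    ((continuous_primitive (fun _ _ => hb.intervalIntegrable) 0).comp
      (Real.continuous_rpow_const hγ.le)).rpow_const fun _ => Or.inr (one_div_nonneg.2 hγ.le)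
  have hint : IntervalIntegrable (powDensity b γ) volume 0 t := by
    refine ((monotoneOn_powDensity hb hb0 hγ hγ1).mono ?_).intervalIntegrable
    rw [uIcc_of_le ht]
    exact Icc_subset_Ici_self
  -- `b` is continuous at `x ^ γ` unless `x` is the `γ⁻¹`-th power of one of its countably many
  -- discontinuities
  rw [integral_eq_of_hasDerivAt_off_countable_of_le _ _ ht
    (hb.countable_not_continuousAt.image fun u => u ^ γ⁻¹) hcont.continuousOn ?_ hint]
  · simp [Real.zero_rpow hγ.ne', hγ.ne']
  rintro x ⟨hx, hxs⟩
  exact hasDerivAt_integral_rpow_rpow hb hb0 hγ hγ1 hx.1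
    (by_contra fun hc => hxs ⟨x ^ γ, hc, Real.rpow_rpow_inv hx.1.le hγ.ne'⟩)

end YoungPower

/-- If `B` is a Young function and `0 < γ < 1`, then
`ψ(t) = B(t^γ)^{1/γ}` is also a Young function. -/
theorem stmt0 (B : ℝ → ℝ) (hB : IsYoung B) (γ : ℝ) (h0 : 0 < γ) (h1 : γ < 1) :
    IsYoung (fun t => B (t ^ γ) ^ (1/γ)) := by
  obtain ⟨b, hb, hb0, hpos, hBb⟩ := hB.exists_monotone_density
  refine ⟨powDensity b γ, powDensity_nonneg hb0 γ, monotoneOn_powDensity hb hb0 h0 h1.le,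
    exists_powDensity_ne_zero hb hb0 h0 hpos, fun t ht => ?_⟩
  rw [integral_powDensity hb hb0 h0 h1.le ht, ← hBb _ (Real.rpow_nonneg ht γ)]

end Frac
end
end

section
/- (Welland-type inequality) Let 0 < α < nm and 0 < ε < min{α, nm - α}. If f₁,…,f_m are bounded functions with compact support, then |I_α f⃗(x)| ≤ C (M_{α+ε} f⃗(x) · M_{α-ε} f⃗(x))^{1/2} for all x, where C depends only on n, m, α, ε. -/
/-!
Split the integral into the dyadic shells `2 ^ k ≤ ∑ i, |x - y i| < 2 ^ (k + 1)`. On the `k`-th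
shell the kernel is at most `2 ^ (k (α - n m))` and the shell lies in `Q ^ m`, where `Q` is the
cube of radius `2 ^ (k + 1)` about `x`; writing `|Q| ^ m = |Q| ^ ((n m - β) / n) |Q| ^ (β / n)`,
the shell contributes at most `4 ^ (n m - β) 2 ^ (k (α - β)) 𝓜_β f⃗(x)` for every `β`. With
`β = α + ε` this decays as `k → ∞`, with `β = α - ε` as `k → -∞`; cutting the two geometric series
where `2 ^ (k ε) ≈ (𝓜_{α+ε} f⃗(x) / 𝓜_{α-ε} f⃗(x)) ^ (1/2)` leaves their geometric mean.

The `fᵢ` need not be measurable, so `∫⁻` is a lower integral; for bounded functions it still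
satisfies `∫⁻ ∏ gᵢ (yᵢ) ≤ ∏ ∫⁻ gᵢ`.
-/

open MeasureTheory ENNReal Set
open scoped BigOperators NNReal

noncomputable section
namespace Frac

section ProductIntegral

variable {X Y : Type*} [MeasurableSpace X] [MeasurableSpace Y]

lemma lintegral_prod_mul_le (μ : Measure X) (ν : Measure Y) (u : X → ℝ≥0∞) (v : Y → ℝ≥0∞)
    (hu : ∀ x, u x ≠ ∞) (hv : ∫⁻ y, v y ∂ν ≠ ∞) :
    ∫⁻ z, u z.1 * v z.2 ∂μ.prod ν ≤ (∫⁻ x, u x ∂μ) * ∫⁻ y, v y ∂ν :=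
  calc ∫⁻ z, u z.1 * v z.2 ∂μ.prod ν ≤ ∫⁻ x, ∫⁻ y, u x * v y ∂ν ∂μ := lintegral_prod_le _
    _ = ∫⁻ x, u x * ∫⁻ y, v y ∂ν ∂μ :=
      lintegral_congr fun x => lintegral_const_mul' _ _ (hu x)
    _ = (∫⁻ x, u x ∂μ) * ∫⁻ y, v y ∂ν := lintegral_mul_const' _ _ hv

lemma lintegral_pi_prod_le {m : ℕ} (μ : Fin m → Measure X) [∀ i, SigmaFinite (μ i)]
    (h : Fin m → X → ℝ≥0∞) (hfin : ∀ i x, h i x ≠ ∞) (hint : ∀ i, ∫⁻ x, h i x ∂μ i ≠ ∞) :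
    ∫⁻ y, ∏ i, h i (y i) ∂Measure.pi μ ≤ ∏ i, ∫⁻ x, h i x ∂μ i := by
  induction m with
  | zero => simp
  | succ m ih =>
    have ih' := ih (fun j => μ j.succ) (fun j => h j.succ) (fun j => hfin j.succ)
      (fun j => hint j.succ)
    let e := MeasurableEquiv.piFinSuccAbove (fun _ : Fin (m + 1) => X) 0
    have he : ∀ y, ∏ i, h i (y i) = h 0 (e y).1 * ∏ j, h j.succ ((e y).2 j) := fun y =>
      Fin.prod_univ_succ _
    calc ∫⁻ y, ∏ i, h i (y i) ∂Measure.pi μ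
        = ∫⁻ p, h 0 p.1 * ∏ j, h j.succ (p.2 j)
            ∂(μ 0).prod (Measure.pi fun j : Fin m => μ j.succ) := by
          simp_rw [he]
          exact (measurePreserving_piFinSuccAbove μ 0).lintegral_comp_emb e.measurableEmbedding
            (fun p => h 0 p.1 * ∏ j, h j.succ (p.2 j))
      _ ≤ (∫⁻ x, h 0 x ∂μ 0) *
            ∫⁻ w : Fin m → X, ∏ j, h j.succ (w j) ∂Measure.pi fun j => μ j.succ :=
          lintegral_prod_mul_le _ _ _ _ (hfin 0)
            (ne_top_of_le_ne_top (ENNReal.prod_ne_top fun j _ => hint j.succ) ih')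
      _ ≤ ∏ i, ∫⁻ x, h i x ∂μ i := by
          rw [Fin.prod_univ_succ]
          gcongr

lemma setLIntegral_univ_pi_prod_le {m : ℕ} (μ : Measure X)
    [SigmaFinite μ] (g : Fin m → X → ℝ≥0∞) (hg : ∀ i, ∃ M : ℝ≥0, ∀ x, g i x ≤ M) {Q : Set X}
    (hQ : μ Q ≠ ⊤) :
    ∫⁻ y in univ.pi (fun _ => Q), ∏ i, g i (y i) ∂(Measure.pi fun _ => μ) ≤
      ∏ i, ∫⁻ x in Q, g i x ∂μ := by
  rw [Measure.restrict_pi_pi]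
  refine lintegral_pi_prod_le _ g (fun i x => ?_) fun i => ?_
  · obtain ⟨M, hM⟩ := hg i
    exact ne_top_of_le_ne_top coe_ne_top (hM x)
  · obtain ⟨M, hM⟩ := hg i
    refine ne_top_of_le_ne_top (ENNReal.mul_ne_top (coe_ne_top (r := M)) hQ) ?_
    calc ∫⁻ x in Q, g i x ∂μ ≤ ∫⁻ _ in Q, (M : ℝ≥0∞) ∂μ := lintegral_mono fun x => hM x
      _ = M * μ Q := setLIntegral_const _ _

end ProductIntegral

section DyadicSums

lemma two_rpow_add_nat_mul (a b : ℝ) (j : ℕ) : (2 : ℝ≥0∞) ^ (a + j * b) = 2 ^ a * (2 ^ b) ^ j := by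
  rw [ENNReal.rpow_add _ _ two_ne_zero ofNat_ne_top, mul_comm (j : ℝ), ENNReal.rpow_mul,
    ENNReal.rpow_natCast]

variable {ε : ℝ}

lemma tsum_min_two_rpow_le (K : ℤ) (A B : ℝ≥0∞) :
    ∑' k : ℤ, min (2 ^ (-(k * ε)) * A) (2 ^ (k * ε) * B) ≤
      (2 ^ (-(K * ε)) * A + 2 ^ ((K - 1) * ε) * B) * (1 - 2 ^ (-ε))⁻¹ := by
  set f : ℤ → ℝ≥0∞ := fun k => min (2 ^ (-(k * ε)) * A) (2 ^ (k * ε) * B)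
  have hupper : ∀ j : ℕ, f (j + K) ≤ 2 ^ (-(K * ε)) * A * (2 ^ (-ε)) ^ j := fun j =>
    calc f (j + K) ≤ 2 ^ (-(((j + K : ℤ) : ℝ) * ε)) * A := min_le_left _ _
      _ = 2 ^ (-(K * ε)) * A * (2 ^ (-ε)) ^ j := by
        rw [show -(((j + K : ℤ) : ℝ) * ε) = -(K * ε) + j * (-ε) by push_cast; ring,
          two_rpow_add_nat_mul]
        ring
  have hlower : ∀ j : ℕ, f (-(j + 1) + K) ≤ 2 ^ ((K - 1) * ε) * B * (2 ^ (-ε)) ^ j := fun j =>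
    calc f (-(j + 1) + K) ≤ 2 ^ (((-(j + 1) + K : ℤ) : ℝ) * ε) * B := min_le_right _ _
      _ = 2 ^ ((K - 1) * ε) * B * (2 ^ (-ε)) ^ j := by
        rw [show ((-(j + 1) + K : ℤ) : ℝ) * ε = (K - 1) * ε + j * (-ε) by push_cast; ring,
          two_rpow_add_nat_mul]
        ring
  calc ∑' k, f k = ∑' j : ℕ, f (j + K) + ∑' j : ℕ, f (-(j + 1) + K) := by
        rw [← (Equiv.addRight K).tsum_eq, tsum_of_nat_of_neg_add_one ENNReal.summable
          ENNReal.summable]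
        rfl
    _ ≤ ∑' j : ℕ, 2 ^ (-(K * ε)) * A * (2 ^ (-ε)) ^ j
          + ∑' j : ℕ, 2 ^ ((K - 1) * ε) * B * (2 ^ (-ε)) ^ j :=
        add_le_add (ENNReal.tsum_le_tsum hupper) (ENNReal.tsum_le_tsum hlower)
    _ = (2 ^ (-(K * ε)) * A + 2 ^ ((K - 1) * ε) * B) * (1 - 2 ^ (-ε))⁻¹ := by
        rw [ENNReal.tsum_mul_left, ENNReal.tsum_mul_left, ENNReal.tsum_geometric, add_mul]

lemma exists_int_two_rpow_mul_le_of_mul_self_eq (hε : 0 < ε) {A B P : ℝ≥0∞} (hA : A ≠ 0)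
    (hAt : A ≠ ⊤) (hP : P ≠ 0) (hPt : P ≠ ⊤) (hPAB : P * P = A * B) :
    ∃ K : ℤ, 2 ^ (-(K * ε)) * A ≤ P ∧ 2 ^ ((K - 1) * ε) * B ≤ P := by
  have hρ : 1 < (2 : ℝ≥0∞) ^ ε := ENNReal.one_lt_rpow one_lt_two hε
  obtain ⟨N, hlow, hup⟩ := ENNReal.exists_mem_Ioc_zpow (x := A / P)
    (ENNReal.div_ne_zero.2 ⟨hA, hPt⟩) (ENNReal.div_ne_top hAt hP) hρ
    (ENNReal.rpow_ne_top_of_nonneg hε.le ofNat_ne_top)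
  simp only [← ENNReal.rpow_intCast, ← ENNReal.rpow_mul] at hlow hup
  refine ⟨N + 1, ?_, ?_⟩
  · have hAP : A ≤ 2 ^ (((N + 1 : ℤ) : ℝ) * ε) * P := by
      rw [← ENNReal.div_le_iff hP hPt, mul_comm]; exact hup
    calc 2 ^ (-(((N + 1 : ℤ) : ℝ) * ε)) * A
        ≤ 2 ^ (-(((N + 1 : ℤ) : ℝ) * ε)) * (2 ^ (((N + 1 : ℤ) : ℝ) * ε) * P) := by gcongr
      _ = P := by
        rw [← mul_assoc, ← ENNReal.rpow_add _ _ two_ne_zero ofNat_ne_top, neg_add_cancel,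
          ENNReal.rpow_zero, one_mul]
  · have hNP : 2 ^ ((N : ℝ) * ε) * P ≤ A := by
      rw [← ENNReal.le_div_iff_mul_le (Or.inl hP) (Or.inl hPt), mul_comm]; exact hlow.le
    rw [show (((N + 1 : ℤ) : ℝ) - 1) * ε = N * ε by push_cast; ring]
    refine (ENNReal.mul_le_mul_iff_left hP hPt).1 ?_
    calc 2 ^ ((N : ℝ) * ε) * B * P = 2 ^ ((N : ℝ) * ε) * P * B := by ring
      _ ≤ A * B := by gcongr
      _ = P * P := hPAB.symm

lemma tsum_min_two_rpow_le_sqrt (hε : 0 < ε) (A B : ℝ≥0∞) :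
    ∑' k : ℤ, min (2 ^ (-(k * ε)) * A) (2 ^ (k * ε) * B) ≤
      2 * (1 - 2 ^ (-ε))⁻¹ * (A * B) ^ (1 / 2 : ℝ) := by
  rcases eq_or_ne A 0 with rfl | hA
  · simp
  rcases eq_or_ne B 0 with rfl | hB
  · simp
  by_cases hABt : A = ⊤ ∨ B = ⊤
  · have hq : (1 - (2 : ℝ≥0∞) ^ (-ε))⁻¹ ≠ 0 := ENNReal.inv_ne_zero.2 (by finiteness)
    have hAB : A * B = ⊤ := by rcases hABt with rfl | rfl <;> simp [*]
    simp [hAB, hq]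
  obtain ⟨hAt, hBt⟩ := not_or.1 hABt
  set P := (A * B) ^ (1 / 2 : ℝ)
  have hPAB : P * P = A * B := by
    rw [← ENNReal.rpow_add _ _ (mul_ne_zero hA hB) (ENNReal.mul_ne_top hAt hBt)]
    norm_num
  obtain ⟨K, hKA, hKB⟩ := exists_int_two_rpow_mul_le_of_mul_self_eq hε hA hAt (by positivity)
    (ENNReal.rpow_ne_top_of_nonneg (by norm_num) (ENNReal.mul_ne_top hAt hBt)) hPAB
  calc _ ≤ (2 ^ (-(K * ε)) * A + 2 ^ ((K - 1) * ε) * B) * (1 - 2 ^ (-ε))⁻¹ :=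
        tsum_min_two_rpow_le K A B
    _ ≤ (P + P) * (1 - 2 ^ (-ε))⁻¹ := by gcongr
    _ = 2 * (1 - 2 ^ (-ε))⁻¹ * P := by ring

end DyadicSums

section Shells

variable {n m : ℕ}

def sumDist (x : Rn n) (y : Fin m → Rn n) : ℝ := ∑ i, dist x (y i)

def shell (x : Rn n) (t : ℝ) : Set (Fin m → Rn n) := sumDist x ⁻¹' Ico t (2 * t)

lemma continuous_sumDist (x : Rn n) : Continuous (sumDist (m := m) x) :=
  continuous_finsetSum _ fun i _ => continuous_const.dist (continuous_apply i)

lemma sumDist_eq_zero_iff (x : Rn n) (y : Fin m → Rn n) : sumDist x y = 0 ↔ y = fun _ => x := by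
  rw [sumDist, Finset.sum_eq_zero_iff_of_nonneg fun _ _ => dist_nonneg]
  simp [funext_iff, eq_comm]

lemma ae_sumDist_pos (hn : 0 < n) (hm : 0 < m) (x : Rn n) :
    ∀ᵐ y : Fin m → Rn n, 0 < sumDist x y := by
  have : NeZero n := ⟨hn.ne'⟩
  have : NeZero m := ⟨hm.ne'⟩
  filter_upwards [measure_eq_zero_iff_ae_notMem.1 (measure_singleton fun _ : Fin m => x)]
    with y hy
  exact (Finset.sum_nonneg fun i _ => dist_nonneg).lt_of_ne'
    fun h => hy ((sumDist_eq_zero_iff x y).1 h)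

lemma lintegral_le_tsum_setLIntegral_dyadicShell (hn : 0 < n) (hm : 0 < m) (x : Rn n)
    (F : (Fin m → Rn n) → ℝ≥0∞) :
    ∫⁻ y, F y ≤ ∑' k : ℤ, ∫⁻ y in shell x (2 ^ k), F y := by
  have hcover : (univ : Set (Fin m → Rn n)) ≤ᵐ[volume] ⋃ k : ℤ, shell x (2 ^ k) := by
    filter_upwards [ae_sumDist_pos hn hm x] with y hy _
    obtain ⟨k, hk⟩ := exists_mem_Ico_zpow hy one_lt_two
    rw [zpow_add_one₀ two_ne_zero, mul_comm] at hk
    exact mem_iUnion.2 ⟨k, hk⟩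
  calc ∫⁻ y, F y = ∫⁻ y in univ, F y := setLIntegral_univ F |>.symm
    _ ≤ ∫⁻ y in ⋃ k : ℤ, shell x (2 ^ k), F y :=
      lintegral_mono' (Measure.restrict_mono_ae hcover) le_rfl
    _ ≤ _ := lintegral_iUnion_le _ _

lemma vol_eq_ofReal_pow (c : Rn n) {r : ℝ} (hr : 0 ≤ r) : vol c r = ENNReal.ofReal (2 * r) ^ n := by
  rw [vol, cube, Real.volume_pi_closedBall c hr, Fintype.card_fin,
    ENNReal.ofReal_pow (by positivity)]

lemma le_mfm (β : ℝ) (g : Fin m → Rn n → ℝ≥0∞) {x c : Rn n} {r : ℝ} (hr : 0 < r)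
    (hx : x ∈ cube c r) : vol c r ^ (β / n) * ∏ i, avg c r (g i) ≤ mfm β g x :=
  le_iSup_of_le c <| le_iSup_of_le r <| le_iSup_of_le hr <| le_iSup_of_le hx le_rfl

lemma prod_setLIntegral_cube_le_mfm (hn : 0 < n) (β : ℝ) (g : Fin m → Rn n → ℝ≥0∞) (x : Rn n)
    {r : ℝ} (hr : 0 < r) :
    ∏ i, ∫⁻ y in cube x r, g i y ≤ vol x r ^ ((n * m - β) / n) * mfm β g x := by
  have hvol0 : vol x r ≠ 0 := by rw [vol_eq_ofReal_pow x hr.le]; simp [hr]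
  have hvolt : vol x r ≠ ⊤ := by rw [vol_eq_ofReal_pow x hr.le]; finiteness
  have havg : ∀ i, ∫⁻ y in cube x r, g i y = vol x r * avg x r (g i) := fun i => by
    rw [avg, ← mul_assoc, ENNReal.mul_inv_cancel hvol0 hvolt, one_mul]
  calc ∏ i, ∫⁻ y in cube x r, g i y
      = vol x r ^ ((n * m - β) / n) * (vol x r ^ (β / n) * ∏ i, avg x r (g i)) := by
        rw [Finset.prod_congr rfl fun i _ => havg i, Finset.prod_mul_distrib, Finset.prod_const,
          Finset.card_univ, Fintype.card_fin, ← mul_assoc,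
          ← ENNReal.rpow_add _ _ hvol0 hvolt, ← ENNReal.rpow_natCast]
        congr 2
        field_simp
        ring
    _ ≤ vol x r ^ ((n * m - β) / n) * mfm β g x :=
        mul_le_mul_right (le_mfm β g hr (Metric.mem_closedBall_self hr.le)) _

lemma setLIntegral_shell_le (hn : 0 < n) {α : ℝ} (hα : α ≤ n * m) (β : ℝ)
    (g : Fin m → Rn n → ℝ≥0∞) (hg : ∀ i, ∃ M : ℝ≥0, ∀ y, g i y ≤ M) (x : Rn n) {t : ℝ}
    (ht : 0 < t) :
    ∫⁻ y in shell x t,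
        (∏ i, g i (y i)) * ENNReal.ofReal (sumDist x y) ^ (α - n * m) ≤
      4 ^ (n * m - β) * ENNReal.ofReal t ^ (α - β) * mfm β g x := by
  set E := shell x t
  have hE : MeasurableSet E := (continuous_sumDist x).measurable measurableSet_Ico
  have ht0 : ENNReal.ofReal t ≠ 0 := by simp [ht]
  have hkernel : ∀ y ∈ E, ENNReal.ofReal (sumDist x y) ^ (α - n * m) ≤
      ENNReal.ofReal t ^ (α - n * m) := fun y hy => by
    rw [ENNReal.ofReal_rpow_of_pos (ht.trans_le hy.1), ENNReal.ofReal_rpow_of_pos ht]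
    exact ENNReal.ofReal_le_ofReal (Real.rpow_le_rpow_of_nonpos ht hy.1 (by linarith))
  have hEpi : E ⊆ univ.pi fun _ => cube x (2 * t) := fun y hy i _ => by
    rw [cube, Metric.mem_closedBall, dist_comm]
    exact ((Finset.single_le_sum (fun j _ => dist_nonneg) (Finset.mem_univ i)).trans
      hy.2.le : dist x (y i) ≤ 2 * t)
  have hvolt : vol x (2 * t) ≠ ⊤ := by rw [vol_eq_ofReal_pow x (by positivity)]; finiteness
  have hvol :
      vol x (2 * t) ^ ((n * m - β) / n) = 4 ^ (n * m - β) * ENNReal.ofReal t ^ (n * m - β) := by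
    rw [vol_eq_ofReal_pow x (by positivity), ← ENNReal.rpow_natCast, ← ENNReal.rpow_mul,
      mul_div_cancel₀ _ (by positivity : (n : ℝ) ≠ 0), ← mul_assoc,
      ENNReal.ofReal_mul (by norm_num), ENNReal.mul_rpow_of_ne_zero (by norm_num) ht0]
    norm_num
  calc ∫⁻ y in E, (∏ i, g i (y i)) * ENNReal.ofReal (sumDist x y) ^ (α - n * m)
      ≤ ∫⁻ y in E, (∏ i, g i (y i)) * ENNReal.ofReal t ^ (α - n * m) :=
        setLIntegral_mono' hE fun y hy => mul_le_mul_right (hkernel y hy) _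
    _ = ENNReal.ofReal t ^ (α - n * m) * ∫⁻ y in E, ∏ i, g i (y i) := by
        rw [lintegral_mul_const' _ _ (by finiteness), mul_comm]
    _ ≤ ENNReal.ofReal t ^ (α - n * m) * ∏ i, ∫⁻ y in cube x (2 * t), g i y := by
        gcongr
        exact (lintegral_mono_set hEpi).trans
          (setLIntegral_univ_pi_prod_le volume g hg hvolt)
    _ ≤ ENNReal.ofReal t ^ (α - n * m) * (vol x (2 * t) ^ ((n * m - β) / n) * mfm β g x) := by
        gcongr
        exact prod_setLIntegral_cube_le_mfm hn β g x (by positivity)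
    _ = 4 ^ (n * m - β) * ENNReal.ofReal t ^ (α - β) * mfm β g x := by
        rw [hvol, show α - β = (α - n * m) + (n * m - β) by ring,
          ENNReal.rpow_add _ _ ht0 ofReal_ne_top]
        ring

lemma ofReal_two_zpow_rpow (k : ℤ) (p : ℝ) :
    ENNReal.ofReal ((2 : ℝ) ^ k) ^ p = 2 ^ (k * p) := by
  rw [ENNReal.ofReal_rpow_of_pos (zpow_pos two_pos k), ← Real.rpow_intCast,
    ← Real.rpow_mul zero_le_two, ← ENNReal.ofReal_rpow_of_pos two_pos, ENNReal.ofReal_ofNat]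

lemma setLIntegral_dyadicShell_le_min (hn : 0 < n) {α ε : ℝ} (hα : α ≤ n * m) (hε : 0 ≤ ε)
    (g : Fin m → Rn n → ℝ≥0∞) (hg : ∀ i, ∃ M : ℝ≥0, ∀ y, g i y ≤ M) (x : Rn n) (k : ℤ) :
    ∫⁻ y in shell x (2 ^ k),
        (∏ i, g i (y i)) * ENNReal.ofReal (sumDist x y) ^ (α - n * m) ≤
      4 ^ (n * m - α + ε) *
        min ((2 : ℝ≥0∞) ^ (-(k * ε)) * mfm (α + ε) g x) (2 ^ (k * ε) * mfm (α - ε) g x) := by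
  have hk : (0 : ℝ) < 2 ^ k := zpow_pos two_pos k
  rw [← min_mul_mul_left]
  apply le_min
  · calc _ ≤ 4 ^ (n * m - (α + ε)) * ENNReal.ofReal (2 ^ k) ^ (α - (α + ε)) * mfm (α + ε) g x :=
          setLIntegral_shell_le hn hα _ g hg x hk
      _ ≤ 4 ^ (n * m - α + ε) * (2 ^ (-(k * ε)) * mfm (α + ε) g x) := by
          rw [ofReal_two_zpow_rpow, show (k : ℝ) * (α - (α + ε)) = -(k * ε) by ring, mul_assoc]
          gcongr
          · norm_num
          · linarith
  · calc _ ≤ 4 ^ (n * m - (α - ε)) * ENNReal.ofReal (2 ^ k) ^ (α - (α - ε)) * mfm (α - ε) g x :=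
          setLIntegral_shell_le hn hα _ g hg x hk
      _ = 4 ^ (n * m - α + ε) * (2 ^ (k * ε) * mfm (α - ε) g x) := by
          rw [ofReal_two_zpow_rpow, show (n * m - (α - ε) : ℝ) = n * m - α + ε by ring,
            show α - (α - ε) = ε by ring, mul_assoc]

end Shells

theorem stmt14_general {n m : ℕ} (hn : 0 < n) (hm : 0 < m) (α ε : ℝ)
    (hαnm : α < (n:ℝ)*m) (hε : 0 < ε) :
    ∃ C : ℝ, 0 < C ∧ ∀ f : Fin m → Rn n → ℝ,
      (∀ i, ∃ M : ℝ, ∀ y, |f i y| ≤ M) → (∀ i, HasCompactSupport (f i)) →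
      ∀ x : Rn n,
        Ia α (fun i y => ENNReal.ofReal |f i y|) x ≤
          ENNReal.ofReal C *
            (mfm (α+ε) (fun i y => ENNReal.ofReal |f i y|) x *
              mfm (α-ε) (fun i y => ENNReal.ofReal |f i y|) x) ^ ((1:ℝ)/2) := by
  have hq : (1 - (2 : ℝ≥0∞) ^ (-ε))⁻¹ ≠ ⊤ := ENNReal.inv_ne_top.2 (tsub_pos_iff_lt.2
    (ENNReal.rpow_lt_one_of_one_lt_of_neg one_lt_two (neg_lt_zero.2 hε))).ne'
  set c : ℝ≥0∞ := 4 ^ ((n : ℝ) * m - α + ε) * (2 * (1 - 2 ^ (-ε))⁻¹)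
  have hc0 : c ≠ 0 := by simp [c]
  have hct : c ≠ ⊤ := by finiteness
  refine ⟨c.toReal, ENNReal.toReal_pos hc0 hct, fun f hf _ x => ?_⟩
  set g : Fin m → Rn n → ℝ≥0∞ := fun i y => ENNReal.ofReal |f i y|
  have hg : ∀ i, ∃ M : ℝ≥0, ∀ y, g i y ≤ M := fun i =>
    let ⟨M, hM⟩ := hf i
    ⟨M.toNNReal, fun y => ENNReal.ofReal_le_ofReal (hM y)⟩
  calc Ia α g x
      ≤ ∑' k : ℤ, ∫⁻ y in shell x (2 ^ k),
          (∏ i, g i (y i)) * ENNReal.ofReal (sumDist x y) ^ (α - n * m) :=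
        lintegral_le_tsum_setLIntegral_dyadicShell hn hm x _
    _ ≤ ∑' k : ℤ, 4 ^ ((n : ℝ) * m - α + ε) *
          min (2 ^ (-(k * ε)) * mfm (α + ε) g x) (2 ^ (k * ε) * mfm (α - ε) g x) :=
        ENNReal.tsum_le_tsum fun k => setLIntegral_dyadicShell_le_min hn hαnm.le hε.le g hg x k
    _ ≤ 4 ^ ((n : ℝ) * m - α + ε) *
          (2 * (1 - 2 ^ (-ε))⁻¹ * (mfm (α + ε) g x * mfm (α - ε) g x) ^ (1 / 2 : ℝ)) := by
        rw [ENNReal.tsum_mul_left]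
        gcongr
        exact tsum_min_two_rpow_le_sqrt hε _ _
    _ = ENNReal.ofReal c.toReal * (mfm (α + ε) g x * mfm (α - ε) g x) ^ (1 / 2 : ℝ) := by
        rw [ENNReal.ofReal_toReal hct, ← mul_assoc]

/-- Welland-type inequality:
`|𝓘_α f⃗(x)| ≤ C (𝓜_{α+ε} f⃗(x) · 𝓜_{α-ε} f⃗(x))^{1/2}`. -/
theorem stmt14 {n m : ℕ} (hn : 0 < n) (hm : 0 < m) (α ε : ℝ) (hα : 0 < α)
    (hαnm : α < (n:ℝ)*m) (hε : 0 < ε) (hεα : ε < min α ((n:ℝ)*m - α)) :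
    ∃ C : ℝ, 0 < C ∧ ∀ f : Fin m → Rn n → ℝ,
      (∀ i, ∃ M : ℝ, ∀ y, |f i y| ≤ M) → (∀ i, HasCompactSupport (f i)) →
      ∀ x : Rn n,
        Ia α (fun i y => ENNReal.ofReal |f i y|) x ≤
          ENNReal.ofReal C *
            (mfm (α+ε) (fun i y => ENNReal.ofReal |f i y|) x *
              mfm (α-ε) (fun i y => ENNReal.ofReal |f i y|) x) ^ ((1:ℝ)/2) :=
  stmt14_general hn hm α ε hαnm hε

end Frac
end
end

section
/- Let g be any locally integrable function such that Mg is finite a.e. and let β > 0. Then (Mg)^{-β} belongs to RH_∞, i.e., there is C such that sup_{x∈Q} (Mg(x))^{-β} ≤ (C/|Q|)∫_Q (Mg)^{-β} for every cube Q. -/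
/-! Fix a cube `Q ∋ x` and put `λ = 2·12ⁿ·Mh(x)`. A cube through a point of `Q` on which the
average of `h` exceeds `λ` cannot be larger than `Q`: otherwise its triple contains `x`, so its
average is at most `3ⁿ·Mh(x)`. Hence all such cubes lie in `3Q`, and the Vitali covering lemma
bounds `|{y ∈ Q : Mh(y) > λ}|` by `4ⁿ λ⁻¹ ∫_{3Q} h ≤ 12ⁿ |Q| Mh(x) / λ = |Q|/2`. On the other half
of `Q` we have `(Mh)^{-β} ≥ λ^{-β}`, which gives `(Mh(x))^{-β} ≤ 2 (2·12ⁿ)^β ⨍_Q (Mh)^{-β}`. -/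

open MeasureTheory ENNReal Set
open scoped BigOperators NNReal

noncomputable section
namespace Frac

lemma _root_.ENNReal.rpow_neg_le_rpow_neg {a b : ℝ≥0∞} (hab : a ≤ b) {β : ℝ} (hβ : 0 ≤ β) :
    b ^ (-β) ≤ a ^ (-β) := by
  rw [ENNReal.rpow_neg, ENNReal.rpow_neg]
  exact ENNReal.inv_le_inv.2 (ENNReal.rpow_le_rpow hab hβ)

lemma _root_.ENNReal.rpow_neg_eq_rpow_mul_mul_rpow_neg {K : ℝ≥0∞} (hK₀ : K ≠ 0) (hK : K ≠ ⊤)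
    (a : ℝ≥0∞) (β : ℝ) : a ^ (-β) = K ^ β * (K * a) ^ (-β) := by
  rw [ENNReal.mul_rpow_eq_ite, if_neg (by simp [hK₀, hK]), ← mul_assoc, ENNReal.rpow_neg K,
    ENNReal.mul_inv_cancel (ENNReal.rpow_pos (pos_iff_ne_zero.2 hK₀) hK).ne'
      (ENNReal.rpow_ne_top_of_ne_zero hK₀ hK), one_mul]

lemma _root_.ENNReal.mul_div_two_mul_le (a b : ℝ≥0∞) : a * b / (2 * a) ≤ b / 2 := by
  rw [div_eq_mul_inv, ENNReal.mul_inv (Or.inl two_ne_zero) (Or.inl ENNReal.ofNat_ne_top)]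
  calc a * b * (2⁻¹ * a⁻¹) = a * a⁻¹ * (b / 2) := by rw [div_eq_mul_inv]; ring
    _ ≤ b / 2 := mul_le_of_le_one_left' (ENNReal.mul_inv_le_one a)

section

variable {n : ℕ}

lemma vol_eq (c : Rn n) {r : ℝ} (hr : 0 ≤ r) : vol c r = ENNReal.ofReal ((2 * r) ^ n) := by
  rw [vol, cube, Real.volume_pi_closedBall c hr, Fintype.card_fin]

lemma vol_pos (c : Rn n) {r : ℝ} (hr : 0 < r) : 0 < vol c r := by
  rw [vol_eq c hr.le]
  exact ENNReal.ofReal_pos.2 (by positivity)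

lemma vol_ne_top (c : Rn n) (r : ℝ) : vol c r ≠ ⊤ :=
  measure_closedBall_lt_top.ne

lemma vol_natCast_mul (c : Rn n) (k : ℕ) {r : ℝ} (hr : 0 ≤ r) :
    vol c (k * r) = (k : ℝ≥0∞) ^ n * vol c r := by
  rw [vol_eq c (by positivity), vol_eq c hr, ← ENNReal.ofReal_natCast, ← ENNReal.ofReal_pow
    k.cast_nonneg, ← ENNReal.ofReal_mul (by positivity), ← mul_pow, mul_left_comm]

lemma cube_mono (c : Rn n) {r r' : ℝ} (h : r ≤ r') : cube c r ⊆ cube c r' :=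
  Metric.closedBall_subset_closedBall h

lemma cube_subset_cube_three_mul {c c' : Rn n} {r r' : ℝ} (hr : r ≤ r')
    (h : (cube c r ∩ cube c' r').Nonempty) : cube c r ⊆ cube c' (3 * r') := by
  obtain ⟨z, hz, hz'⟩ := h
  refine Metric.closedBall_subset_closedBall' ?_
  rw [cube, Metric.mem_closedBall, dist_comm] at hz hz'
  linarith [dist_triangle_right c c' z]

lemma avg_le_HL (h : Rn n → ℝ≥0∞) {c x : Rn n} {r : ℝ} (hr : 0 < r) (hx : x ∈ cube c r) :
    avg c r h ≤ HL h x := by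
  simp only [HL, lfm, zero_div, ENNReal.rpow_zero, one_mul]
  exact le_iSup₂_of_le c r (le_iSup₂_of_le hr hx le_rfl)

lemma lt_HL_iff {h : Rn n → ℝ≥0∞} {x : Rn n} {a : ℝ≥0∞} :
    a < HL h x ↔ ∃ c r, 0 < r ∧ x ∈ cube c r ∧ a < avg c r h := by
  simp only [HL, lfm, zero_div, ENNReal.rpow_zero, one_mul, lt_iSup_iff, exists_prop]

lemma setLIntegral_cube_le_vol_mul_HL (h : Rn n → ℝ≥0∞) {c x : Rn n} {r : ℝ} (hr : 0 < r)
    (hx : x ∈ cube c r) : ∫⁻ y in cube c r, h y ≤ vol c r * HL h x :=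
  (ENNReal.inv_mul_le_iff (vol_pos c hr).ne' (vol_ne_top c r)).1 (avg_le_HL h hr hx)

lemma avg_le_pow_mul_HL (h : Rn n → ℝ≥0∞) {c x : Rn n} {r : ℝ} {k : ℕ} (hk : 1 ≤ k)
    (hr : 0 < r) (hx : x ∈ cube c (k * r)) : avg c r h ≤ (k : ℝ≥0∞) ^ n * HL h x := by
  rw [avg, ENNReal.inv_mul_le_iff (vol_pos c hr).ne' (vol_ne_top c r), ← mul_assoc,
    mul_comm (vol c r), ← vol_natCast_mul c k hr.le]
  have hkr : r ≤ k * r := le_mul_of_one_le_left hr.le (by exact_mod_cast hk)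
  calc ∫⁻ y in cube c r, h y ≤ ∫⁻ y in cube c (k * r), h y := lintegral_mono_set (cube_mono c hkr)
    _ ≤ vol c (k * r) * HL h x := setLIntegral_cube_le_vol_mul_HL h (hr.trans_le hkr) hx

lemma vol_le_setLIntegral_div {h : Rn n → ℝ≥0∞} {c : Rn n} {r : ℝ} {lam : ℝ≥0∞} (hr : 0 < r)
    (hlam : lam < avg c r h) : vol c r ≤ (∫⁻ y in cube c r, h y) / lam := by
  have hI : (∫⁻ y in cube c r, h y) ≠ 0 := fun hI => by simp [avg, hI] at hlam
  rw [ENNReal.le_div_iff_mul_le (Or.inr hI) (Or.inl hlam.ne_top), mul_comm,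
    ← ENNReal.le_div_iff_mul_le (Or.inl (vol_pos c hr).ne') (Or.inl (vol_ne_top c r)),
    ENNReal.div_eq_inv_mul]
  exact hlam.le

lemma volume_biUnion_cube_le (h : Rn n → ℝ≥0∞) (c : Rn n) (r : ℝ) (lam : ℝ≥0∞)
    (t : Set (Rn n × ℝ)) (ht : ∀ p ∈ t, 0 < p.2 ∧ p.2 ≤ r ∧
      (cube p.1 p.2 ∩ cube c r).Nonempty ∧ lam < avg p.1 p.2 h) :
    volume (⋃ p ∈ t, cube p.1 p.2) ≤ 4 ^ n * ((∫⁻ y in cube c (3 * r), h y) / lam) := by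
  obtain ⟨u, hut, hdisj, hcover⟩ :=
    Vitali.exists_disjoint_subfamily_covering_enlargement_closedBall t Prod.fst Prod.snd r
      (fun p hp => (ht p hp).2.1) 4 (by norm_num)
  have hu : u.Countable :=
    (hdisj.mono fun _ => Metric.ball_subset_closedBall).countable_of_isOpen
      (fun _ _ => Metric.isOpen_ball) fun p hp => Metric.nonempty_ball.2 (ht p (hut hp)).1
  calc volume (⋃ p ∈ t, cube p.1 p.2)
      ≤ volume (⋃ p ∈ u, cube p.1 (4 * p.2)) := by
        refine measure_mono (iUnion₂_subset fun p hp => ?_)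
        obtain ⟨q, hq, hpq⟩ := hcover p hp
        exact hpq.trans (subset_biUnion_of_mem (u := fun q : Rn n × ℝ => cube q.1 (4 * q.2)) hq)
    _ ≤ ∑' p : u, vol p.1.1 (4 * p.1.2) := measure_biUnion_le volume hu _
    _ = ∑' p : u, 4 ^ n * vol p.1.1 p.1.2 := by
        congr 1 with p
        exact_mod_cast vol_natCast_mul p.1.1 4 (ht p (hut p.2)).1.le
    _ ≤ ∑' p : u, 4 ^ n * ((∫⁻ y in cube p.1.1 p.1.2, h y) / lam) :=
        ENNReal.tsum_le_tsum fun p => by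
          gcongr
          exact vol_le_setLIntegral_div (ht p (hut p.2)).1 (ht p (hut p.2)).2.2.2
    _ = 4 ^ n * ((∫⁻ y in ⋃ p ∈ u, cube p.1 p.2, h y) / lam) := by
        rw [lintegral_biUnion (s := fun p : Rn n × ℝ => cube p.1 p.2) hu
            (fun _ _ => measurableSet_closedBall) hdisj,
          ENNReal.tsum_mul_left]
        simp only [div_eq_mul_inv, ENNReal.tsum_mul_right]
    _ ≤ 4 ^ n * ((∫⁻ y in cube c (3 * r), h y) / lam) := by
        gcongr
        exact iUnion₂_subset fun p hp =>
          cube_subset_cube_three_mul (ht p (hut hp)).2.1 (ht p (hut hp)).2.2.1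

/- The bound needs no case split on `HL h x ∈ {0, ∞}`: in `ℝ≥0∞`, `0⁻¹ = ∞` and `∞ * 0 = 0`. -/
lemma volume_lt_HL_le (h : Rn n → ℝ≥0∞) {c x : Rn n} {r : ℝ} (hr : 0 < r) (hx : x ∈ cube c r) :
    volume {y ∈ cube c r | 2 * 12 ^ n * HL h x < HL h y} ≤ vol c r / 2 := by
  set lam : ℝ≥0∞ := 2 * 12 ^ n * HL h x with hlam
  have hsub : {y ∈ cube c r | lam < HL h y} ⊆ ⋃ p ∈ {p : Rn n × ℝ | 0 < p.2 ∧ p.2 ≤ r ∧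
      (cube p.1 p.2 ∩ cube c r).Nonempty ∧ lam < avg p.1 p.2 h}, cube p.1 p.2 := by
    rintro y ⟨hyQ, hy⟩
    obtain ⟨c', r', hr', hyQ', hlt⟩ := lt_HL_iff.1 hy
    have hr'r : r' ≤ r := by
      by_contra! hrr'
      have hx' : x ∈ cube c' ((3 : ℕ) * r') := by
        exact_mod_cast cube_subset_cube_three_mul hrr'.le ⟨y, hyQ, hyQ'⟩ hx
      refine (hlt.trans_le (avg_le_pow_mul_HL h (by norm_num) hr' hx')).not_ge ?_
      have h3 : ((3 : ℕ) : ℝ≥0∞) ^ n ≤ 2 * 12 ^ n :=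
        (pow_le_pow_left₀ (by norm_num) (by norm_num) n).trans (le_mul_of_one_le_left' one_le_two)
      exact mul_le_mul_left h3 _
    exact mem_biUnion (x := (c', r')) ⟨hr', hr'r, ⟨y, hyQ', hyQ⟩, hlt⟩ hyQ'
  calc volume {y ∈ cube c r | lam < HL h y}
      ≤ 4 ^ n * ((∫⁻ y in cube c (3 * r), h y) / lam) :=
        (measure_mono hsub).trans (volume_biUnion_cube_le h c r lam _ fun _ hp => hp)
    _ ≤ 4 ^ n * (3 ^ n * vol c r * HL h x / lam) := by
        gcongr
        have h3 := vol_natCast_mul c 3 hr.le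
        push_cast at h3
        rw [← h3]
        exact setLIntegral_cube_le_vol_mul_HL h (by positivity) (cube_mono c (by linarith) hx)
    _ = 12 ^ n * HL h x * vol c r / (2 * (12 ^ n * HL h x)) := by
        rw [hlam, show (12 : ℝ≥0∞) ^ n = 4 ^ n * 3 ^ n by rw [← mul_pow]; norm_num]
        simp only [div_eq_mul_inv]
        ring_nf
    _ ≤ vol c r / 2 := ENNReal.mul_div_two_mul_le _ _

lemma exists_subset_HL_le (h : Rn n → ℝ≥0∞) {c x : Rn n} {r : ℝ} (hr : 0 < r)
    (hx : x ∈ cube c r) : ∃ E ⊆ cube c r, MeasurableSet E ∧ vol c r / 2 ≤ volume E ∧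
      ∀ y ∈ E, HL h y ≤ 2 * 12 ^ n * HL h x := by
  -- `HL h` is not known to be measurable, so the level set is replaced by a measurable hull.
  set S := {y ∈ cube c r | 2 * 12 ^ n * HL h x < HL h y}
  refine ⟨cube c r \ toMeasurable volume S, sdiff_subset,
    measurableSet_closedBall.diff (measurableSet_toMeasurable _ _), ?_, ?_⟩
  · calc vol c r / 2 = vol c r - vol c r / 2 := (ENNReal.sub_half (vol_ne_top c r)).symm
      _ ≤ vol c r - volume (toMeasurable volume S) := by
          rw [measure_toMeasurable]
          exact tsub_le_tsub_left (volume_lt_HL_le h hr hx) _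
      _ ≤ volume (cube c r \ toMeasurable volume S) := le_measure_sdiff
  · rintro y ⟨hyQ, hyS⟩
    exact not_lt.1 fun hlt => hyS (subset_toMeasurable _ _ ⟨hyQ, hlt⟩)

lemma div_two_le_avg {f : Rn n → ℝ≥0∞} {c : Rn n} {r : ℝ} {a : ℝ≥0∞} {E : Set (Rn n)}
    (hr : 0 < r) (hEQ : E ⊆ cube c r) (hE : MeasurableSet E) (hvol : vol c r / 2 ≤ volume E)
    (hf : ∀ y ∈ E, a ≤ f y) : a / 2 ≤ avg c r f := by
  calc a / 2 = (vol c r)⁻¹ * (a * (vol c r / 2)) := by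
        rw [mul_left_comm, ← mul_div_assoc, ENNReal.inv_mul_cancel (vol_pos c hr).ne'
          (vol_ne_top c r), mul_one_div]
    _ ≤ (vol c r)⁻¹ * ∫⁻ _ in E, a := by
        rw [setLIntegral_const]
        gcongr
    _ ≤ avg c r f := by
        rw [avg]
        gcongr (vol c r)⁻¹ * ?_
        exact (setLIntegral_mono' hE hf).trans (lintegral_mono_set hEQ)

theorem HL_rpow_neg_le_mul_avg (h : Rn n → ℝ≥0∞) {β : ℝ} (hβ : 0 ≤ β) {c x : Rn n} {r : ℝ}
    (hr : 0 < r) (hx : x ∈ cube c r) :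
    HL h x ^ (-β) ≤ (2 * 12 ^ n) ^ β * 2 * avg c r (fun y => HL h y ^ (-β)) := by
  obtain ⟨E, hEQ, hE, hvol, hle⟩ := exists_subset_HL_le h hr hx
  have hK₀ : (2 * 12 ^ n : ℝ≥0∞) ≠ 0 := by positivity
  have hK : (2 * 12 ^ n : ℝ≥0∞) ≠ ⊤ := by finiteness
  calc HL h x ^ (-β) = (2 * 12 ^ n) ^ β * (2 * 12 ^ n * HL h x) ^ (-β) :=
        ENNReal.rpow_neg_eq_rpow_mul_mul_rpow_neg hK₀ hK _ _
    _ = (2 * 12 ^ n) ^ β * 2 * ((2 * 12 ^ n * HL h x) ^ (-β) / 2) := by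
        rw [mul_assoc _ 2, ENNReal.mul_div_cancel two_ne_zero ENNReal.ofNat_ne_top]
    _ ≤ (2 * 12 ^ n) ^ β * 2 * avg c r (fun y => HL h y ^ (-β)) := by
        gcongr
        exact div_two_le_avg hr hEQ hE hvol fun y hy => ENNReal.rpow_neg_le_rpow_neg (hle y hy) hβ

end

theorem stmt15_general {n : ℕ} (g : Rn n → ℝ) (β : ℝ) (hβ : 0 < β) :
    ∃ C : ℝ≥0∞, C ≠ ⊤ ∧ ∀ (c : Rn n) (r : ℝ), 0 < r → ∀ x ∈ cube c r,
      (HL (fun y => ENNReal.ofReal |g y|) x) ^ (-β) ≤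
        C * avg c r (fun y => (HL (fun z => ENNReal.ofReal |g z|) y) ^ (-β)) :=
  ⟨(2 * 12 ^ n) ^ β * 2, by finiteness, fun _ _ hr _ hx => HL_rpow_neg_le_mul_avg _ hβ.le hr hx⟩

/-- if `Mg` is finite a.e. then `(Mg)^{-β} ∈ RH_∞`. -/
theorem stmt15 {n : ℕ} (hn : 0 < n) (g : Rn n → ℝ)
    (hg : LocallyIntegrable g)
    (hfin : ∀ᵐ x, HL (fun y => ENNReal.ofReal |g y|) x ≠ ⊤)
    (β : ℝ) (hβ : 0 < β) :
    ∃ C : ℝ≥0∞, C ≠ ⊤ ∧ ∀ (c : Rn n) (r : ℝ), 0 < r → ∀ x ∈ cube c r,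
      (HL (fun y => ENNReal.ofReal |g y|) x) ^ (-β) ≤
        C * avg c r (fun y => (HL (fun z => ENNReal.ofReal |g z|) y) ^ (-β)) :=
  stmt15_general g β hβ

end Frac
end
end

section
/- Let 1 ≤ p < n/α, 1/q = 1/p - α/n and s = 1 + q/p'. A weight w satisfies the Muckenhoupt–Wheeden A_{p,q} condition if and only if w^q ∈ A_s; in the multilinear setting with 1/q_i = 1/p_i - α/(nm) and s_i = (1-α/(nm))q_i, one has w⃗^q = (w₁^{q₁},…,w_m^{q_m}) ∈ A_{S⃗} if and only if w⃗ ∈ A_{P⃗,q}. -/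
open MeasureTheory ENNReal Set
open scoped BigOperators NNReal

noncomputable section
namespace Frac

/-! With `β = 1 - α/n` (resp. `1 - α/(nm)`) the exponents satisfy `s = βq = 1 + q/p'` and
`(w^q)^{-1/(s-1)} = w^{-p'}`, so on every cube the `A_s` constant of `w^q` is exactly the
`q`-th power of the `A_{p,q}` constant of `w`; in the multilinear case the `A_{S⃗}` constant
of `w⃗^q` is the `1/β`-th power of the `A_{P⃗,q}` constant. A family of constants is bounded
iff a fixed positive power of it is. -/

lemma _root_.ENNReal.essInf_rpow {α : Type*} {_ : MeasurableSpace α} (μ : Measure α)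
    (f : α → ℝ≥0∞) {e : ℝ} (he : 0 < e) :
    essInf (fun y => f y ^ e) μ = essInf f μ ^ e :=
  ((ENNReal.orderIsoRpow e he).essInf_apply f μ).symm

lemma essInf_ofReal_rpow {α : Type*} {_ : MeasurableSpace α} (μ : Measure α) {u : α → ℝ}
    (hu : ∀ x, 0 < u x) {e : ℝ} (he : 0 < e) :
    essInf (fun y => ENNReal.ofReal (u y ^ e)) μ =
      essInf (fun y => ENNReal.ofReal (u y)) μ ^ e := by
  simp_rw [← ENNReal.essInf_rpow μ _ he, ENNReal.ofReal_rpow_of_pos (hu _)]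

lemma exists_bound_iff_of_eq_rpow {κ : Type*} (Φ Ψ : κ → ℝ → ℝ≥0∞) {l : ℝ} (hl : 0 < l)
    (h : ∀ c r, 0 < r → Ψ c r = Φ c r ^ l) :
    (∃ C : ℝ≥0∞, C ≠ ⊤ ∧ ∀ c r, 0 < r → Φ c r ≤ C) ↔
      (∃ C : ℝ≥0∞, C ≠ ⊤ ∧ ∀ c r, 0 < r → Ψ c r ≤ C) := by
  constructor
  · rintro ⟨C, hC, hb⟩
    refine ⟨C ^ l, ENNReal.rpow_ne_top_of_nonneg hl.le hC, fun c r hr => ?_⟩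
    rw [h c r hr]
    exact ENNReal.rpow_le_rpow (hb c r hr) hl.le
  · rintro ⟨C, hC, hb⟩
    refine ⟨C ^ l⁻¹, ENNReal.rpow_ne_top_of_nonneg (inv_nonneg.2 hl.le) hC, fun c r hr => ?_⟩
    rw [← ENNReal.rpow_rpow_inv hl.ne' (Φ c r), ← h c r hr]
    exact ENNReal.rpow_le_rpow (hb c r hr) (inv_nonneg.2 hl.le)

lemma one_div_sub_div_pos {p α N : ℝ} (hα : 0 < α) (hp : 0 < p) (hpN : p < N / α) :
    0 < 1 / p - α / N := by
  have hpα : p * α < N := (lt_div_iff₀ hα).1 hpN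
  have hN : 0 < N := (mul_pos hp hα).trans hpα
  rw [sub_pos, div_lt_div_iff₀ hN hp]
  linarith

section Weights

variable {n : ℕ}

/-- The factor `(⨍_Q w^{-p'})^{1/p'}` of the `A_{p,q}` constant; `(ess inf_Q w)⁻¹` if `p = 1`. -/
def dualNorm (p : ℝ) (c : Rn n) (r : ℝ) (w : Rn n → ℝ) : ℝ≥0∞ :=
  if p = 1 then (essInf (fun y => ENNReal.ofReal (w y)) (volume.restrict (cube c r)))⁻¹
  else (avg c r (fun y => ENNReal.ofReal (w y ^ (-(p/(p-1)))))) ^ ((p-1)/p)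

/-- The factor `(⨍_Q v^{1-s'})^{s-1}` of the `A_s` constant, `(ess inf_Q v)⁻¹` when `s = 1`. -/
def muckDual (s : ℝ) (c : Rn n) (r : ℝ) (v : Rn n → ℝ) : ℝ≥0∞ :=
  if s = 1 then (essInf (fun y => ENNReal.ofReal (v y)) (volume.restrict (cube c r)))⁻¹
  else (avg c r (fun y => ENNReal.ofReal (v y ^ (-(1/(s-1)))))) ^ (s-1)

lemma muckDual_rpow_eq_dualNorm_rpow {p t : ℝ} (hp : 1 ≤ p) (ht : 0 < t) {w : Rn n → ℝ}
    (hw : ∀ x, 0 < w x) (c : Rn n) (r : ℝ) :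
    muckDual (1 + t * (p-1)/p) c r (fun x => w x ^ t) = dualNorm p c r w ^ t := by
  rcases hp.eq_or_lt with rfl | hp1
  · simp [muckDual, dualNorm, essInf_ofReal_rpow _ hw ht, ENNReal.inv_rpow]
  · have hp0 : 0 < p := one_pos.trans hp1
    have hs : t * (p-1)/p ≠ 0 := (div_pos (mul_pos ht (sub_pos.2 hp1)) hp0).ne'
    have hexp : t * (-(1 / (t * (p-1)/p))) = -(p/(p-1)) := by
      field_simp [(sub_pos.2 hp1).ne']
    simp only [muckDual, dualNorm, add_eq_left, hs, hp1.ne', if_false, add_sub_cancel_left]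
    simp_rw [← Real.rpow_mul (hw _).le, hexp, ← ENNReal.rpow_mul]
    ring_nf

lemma multiA_factor_eq_muckDual_rpow (S : ℝ) (c : Rn n) (r : ℝ) (v : Rn n → ℝ) :
    (if S = 1 then (essInf (fun y => ENNReal.ofReal (v y)) (volume.restrict (cube c r)))⁻¹
      else (avg c r (fun y => ENNReal.ofReal (v y ^ (1 - S / (S - 1))))) ^ ((S - 1) / S)) =
      muckDual S c r v ^ (1 / S) := by
  unfold muckDual
  split_ifs with hS
  · simp [hS]
  · have hexp : 1 - S / (S - 1) = -(1 / (S - 1)) := by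
      field_simp [sub_ne_zero.2 hS]
      ring
    rw [hexp, ← ENNReal.rpow_mul, mul_one_div]

lemma apq_iff_amuck_rpow {p q : ℝ} (hp : 1 ≤ p) (hq : 0 < q) {w : Rn n → ℝ}
    (hw : ∀ x, 0 < w x) :
    Apq p q w ↔ Amuck (1 + q * (p-1)/p) (fun x => w x ^ q) := by
  refine exists_bound_iff_of_eq_rpow
    (fun c r => avg c r (fun y => ENNReal.ofReal (w y ^ q)) ^ (1/q) * dualNorm p c r w)
    (fun c r => avg c r (fun y => ENNReal.ofReal (w y ^ q)) * muckDual (1 + q * (p-1)/p) c r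
      (fun x => w x ^ q)) hq fun c r _ => ?_
  rw [muckDual_rpow_eq_dualNorm_rpow hp hq hw, ENNReal.mul_rpow_of_nonneg _ _ hq.le,
    ← ENNReal.rpow_mul, one_div_mul_cancel hq.ne', ENNReal.rpow_one]

lemma ofReal_prod_rpow {m : ℕ} (W : Fin m → Rn n → ℝ) (hW : ∀ i x, 0 < W i x) (q : ℝ)
    (y : Rn n) :
    ∏ i, ENNReal.ofReal (W i y ^ q) = ENNReal.ofReal ((∏ i, W i y) ^ q) := by
  rw [← ENNReal.ofReal_prod_of_nonneg fun i _ => Real.rpow_nonneg (hW i y).le _,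
    Real.finsetProd_rpow _ _ fun i _ => (hW i y).le]

lemma multiA_rpow_iff_apqMulti {m : ℕ} {β qq : ℝ} {P Q S : Fin m → ℝ} (hβ : 0 < β)
    (hP : ∀ i, 1 ≤ P i) (hQ0 : ∀ i, 0 < Q i) (hQ : ∀ i, 1 / Q i = 1 / P i - (1 - β))
    (hS : ∀ i, S i = β * Q i) (hqq : 1 / qq = ∑ i, 1 / Q i)
    {W : Fin m → Rn n → ℝ} (hW : ∀ i x, 0 < W i x) :
    multiA S (fun i x => W i x ^ Q i) ↔ ApqMulti P qq W := by
  have hQ_ne : ∀ i, Q i ≠ 0 := fun i => (hQ0 i).ne'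
  have hS_eq : ∀ i, S i = 1 + Q i * (P i - 1) / P i := fun i => by
    have hP_ne : P i ≠ 0 := (one_pos.trans_le (hP i)).ne'
    have hβ_eq : β = 1 / Q i - 1 / P i + 1 := by linarith [hQ i]
    rw [hS i, hβ_eq]
    field_simp [hQ_ne i]
    ring
  have hsum : ∑ j, 1 / S j = 1 / qq * β⁻¹ := by
    simp_rw [hS, hqq, Finset.sum_mul, one_div, mul_inv_rev]
  have hmean_exp : ∀ i, Q i * ((∑ j, 1 / S j)⁻¹ / S i) = qq := fun i => by
    rw [hsum, hS i]
    field_simp [hQ_ne i]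
  have hdual_exp : ∀ i, Q i * (1 / S i) = β⁻¹ := fun i => by
    rw [hS i]
    field_simp [hQ_ne i]
  refine (exists_bound_iff_of_eq_rpow
    (fun c r => avg c r (fun y => ENNReal.ofReal ((∏ i, W i y) ^ qq)) ^ (1/qq) *
      ∏ i, dualNorm (P i) c r (W i)) _ (inv_pos.2 hβ) fun c r _ => ?_).symm
  have hmean : ∀ y, ∏ i, ENNReal.ofReal ((W i y ^ Q i) ^ ((∑ j, 1 / S j)⁻¹ / S i)) =
      ENNReal.ofReal ((∏ i, W i y) ^ qq) := fun y => by
    simp_rw [← Real.rpow_mul (hW _ y).le, hmean_exp]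
    exact ofReal_prod_rpow W hW qq y
  have hfactor : ∀ i, muckDual (S i) c r (fun y => W i y ^ Q i) ^ (1 / S i) =
      dualNorm (P i) c r (W i) ^ β⁻¹ := fun i => by
    rw [← hdual_exp i, ENNReal.rpow_mul, ← muckDual_rpow_eq_dualNorm_rpow (hP i) (hQ0 i) (hW i),
      ← hS_eq i]
  simp only [multiA_factor_eq_muckDual_rpow, hfactor, hmean]
  rw [hsum, ENNReal.rpow_mul, ENNReal.prod_rpow_of_nonneg (inv_nonneg.2 hβ.le),
    ENNReal.mul_rpow_of_nonneg _ _ (inv_nonneg.2 hβ.le)]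

end Weights

theorem stmt17_general {n m : ℕ} (hm : 0 < m) (α : ℝ) (hα : 0 < α)
    (p q s : ℝ) (hp : 1 ≤ p) (hpn : p < (n:ℝ)/α) (hq : 1/q = 1/p - α/(n:ℝ))
    (hs : s = 1 + q * (p-1)/p)
    (w : Rn n → ℝ) (hw : ∀ x, 0 < w x)
    (P Q S : Fin m → ℝ) (qq : ℝ)
    (hP : ∀ i, 1 ≤ P i ∧ P i < (n:ℝ)*m/α)
    (hQ : ∀ i, 1/(Q i) = 1/(P i) - α/((n:ℝ)*m))
    (hS : ∀ i, S i = (1 - α/((n:ℝ)*m)) * Q i)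
    (hqq : 1/qq = ∑ i, 1/(Q i))
    (W : Fin m → Rn n → ℝ) (hW : ∀ i x, 0 < W i x) :
    (Apq p q w ↔ Amuck s (fun x => w x ^ q)) ∧
    (multiA S (fun i x => W i x ^ (Q i)) ↔ ApqMulti P qq W) := by
  have hq0 : 0 < q := one_div_pos.1 (hq ▸ one_div_sub_div_pos hα (one_pos.trans_le hp) hpn)
  have hQ0 : ∀ i, 0 < Q i := fun i =>
    one_div_pos.1 (hQ i ▸ one_div_sub_div_pos hα (one_pos.trans_le (hP i).1) (hP i).2)
  have hβ : 0 < 1 - α / ((n:ℝ)*m) := by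
    simpa using one_div_sub_div_pos hα one_pos ((hP ⟨0, hm⟩).1.trans_lt (hP ⟨0, hm⟩).2)
  refine ⟨hs ▸ apq_iff_amuck_rpow hp hq0 hw,
    multiA_rpow_iff_apqMulti hβ (fun i => (hP i).1) hQ0 (fun i => by rw [hQ i]; ring) hS hqq hW⟩

/-- `w ∈ A_{p,q} ↔ w^q ∈ A_s` (Muckenhoupt–Wheeden), and the
multilinear analogue `w⃗^q ∈ A_{S⃗} ↔ w⃗ ∈ A_{P⃗,q}`. -/
theorem stmt17 {n m : ℕ} (hn : 0 < n) (hm : 0 < m) (α : ℝ) (hα : 0 < α)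
    (hαn : α < n)
    (p q s : ℝ) (hp : 1 ≤ p) (hpn : p < (n:ℝ)/α) (hq : 1/q = 1/p - α/(n:ℝ))
    (hs : s = 1 + q * (p-1)/p)
    (w : Rn n → ℝ) (hw : ∀ x, 0 < w x)
    (hαnm : α < (n:ℝ)*m)
    (P Q S : Fin m → ℝ) (qq : ℝ)
    (hP : ∀ i, 1 ≤ P i ∧ P i < (n:ℝ)*m/α)
    (hQ : ∀ i, 1/(Q i) = 1/(P i) - α/((n:ℝ)*m))
    (hS : ∀ i, S i = (1 - α/((n:ℝ)*m)) * Q i)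
    (hqq : 1/qq = ∑ i, 1/(Q i))
    (W : Fin m → Rn n → ℝ) (hW : ∀ i x, 0 < W i x) :
    (Apq p q w ↔ Amuck s (fun x => w x ^ q)) ∧
    (multiA S (fun i x => W i x ^ (Q i)) ↔ ApqMulti P qq W) :=
  stmt17_general hm α hα p q s hp hpn hq hs w hw P Q S qq hP hQ hS hqq W hW

end Frac
end
end
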